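/- arXiv:2407.17304 — 5 statements merged into one kernel-verified Lean document; each statement's English description precedes it below -/
import Mathlib

section
/- Let P : V → V be an invertible linear map on a finite-dimensional real vector space with P-invariant decomposition V = E_s ⊕ E_u. Suppose ‖P|_{E_s}‖ ≤ ε and ‖P^{-1}|_{E_u}‖ ≤ ε for some ε with 0 < ε < 1/(2·dim V) (with respect to some fixed norms). Then there exist constants 0 < c_1 ≤ C_1, depending only on dim V and ε, such that c_1 · |det(P|_{E_u})|^{-1} ≤ |det(Id − P)|^{-1} ≤ C_1 · |det(P|_{E_u})|^{-1}. -/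
/-!
Splitting along `E_s ⊕ E_u` and writing `1 - P = -P (1 - P⁻¹)` on `E_u` gives
`det (1 - P) = ± det (P|E_u) · det (1 - P|E_s) · det (1 - P⁻¹|E_u)`. Both `P|E_s` and `P⁻¹|E_u`
are `ε`-contractions `A`, so `(1 - ε)‖x‖ ≤ ‖(1 - A) x‖ ≤ (1 + ε)‖x‖`. A map stretching every
vector by at most `r` has `|det| ≤ r ^ dim`, since it maps the unit ball into the ball of radius
`r` and scales Haar measure by `|det|`; applied to the inverse this also gives the lower bound.
Hence one may take `c₁ = (1 + ε)⁻ⁿ` and `C₁ = (1 - ε)⁻ⁿ`.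
-/

open Module MeasureTheory Metric

section Algebraic

variable {K V : Type*} [Field K] [AddCommGroup V] [Module K V]

theorem LinearMap.restrict_id_sub (f : V →ₗ[K] V) {W : Submodule K V} (hW : ∀ x ∈ W, f x ∈ W)
    (h : ∀ x ∈ W, (LinearMap.id - f : V →ₗ[K] V) x ∈ W) :
    (LinearMap.id - f).restrict h = LinearMap.id - f.restrict hW :=
  rfl

variable [FiniteDimensional K V]

theorem LinearMap.det_eq_det_restrict_mul_det_restrict {p q : Submodule K V} (hpq : IsCompl p q)
    (f : V →ₗ[K] V) (hp : ∀ x ∈ p, f x ∈ p) (hq : ∀ x ∈ q, f x ∈ q) :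
    LinearMap.det f = LinearMap.det (f.restrict hp) * LinearMap.det (f.restrict hq) := by
  set e := Submodule.prodEquivOfIsCompl p q hpq
  have hconj : f ∘ₗ (e : p × q →ₗ[K] V) =
      (e : p × q →ₗ[K] V) ∘ₗ (f.restrict hp).prodMap (f.restrict hq) := by
    ext x <;> simp [e]
  rw [← det_prodMap, ← det_conj _ e, ← comp_assoc, ← hconj, comp_assoc, e.comp_symm, comp_id]

theorem LinearEquiv.forall_symm_mem_of_forall_mem (P : V ≃ₗ[K] V) {W : Submodule K V}
    (hW : ∀ x ∈ W, P x ∈ W) : ∀ x ∈ W, P.symm x ∈ W := by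
  have hmap : W.map (P : V →ₗ[K] V) = W :=
    Submodule.eq_of_le_of_finrank_eq (Submodule.map_le_iff_le_comap.2 hW) (P.finrank_map_eq W)
  intro x hx
  rw [← hmap] at hx
  obtain ⟨y, hy, rfl⟩ := hx
  simpa using hy

theorem LinearEquiv.det_id_sub_eq_of_isCompl (P : V ≃ₗ[K] V) {p q : Submodule K V}
    (hpq : IsCompl p q) (hp : ∀ x ∈ p, P x ∈ p) (hq : ∀ x ∈ q, P x ∈ q)
    (hq' : ∀ x ∈ q, P.symm x ∈ q) :
    LinearMap.det (LinearMap.id - P.toLinearMap) =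
      (-1) ^ finrank K q * LinearMap.det (P.toLinearMap.restrict hq) *
        (LinearMap.det (LinearMap.id - P.toLinearMap.restrict hp) *
          LinearMap.det (LinearMap.id - P.symm.toLinearMap.restrict hq')) := by
  have hfactor : LinearMap.id - P.toLinearMap.restrict hq =
      (-1 : K) • (P.toLinearMap.restrict hq ∘ₗ
        (LinearMap.id - P.symm.toLinearMap.restrict hq')) := by
    ext x
    simp
  rw [LinearMap.det_eq_det_restrict_mul_det_restrict hpq _
      (fun x hx => p.sub_mem hx (hp x hx)) (fun x hx => q.sub_mem hx (hq x hx)),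
    LinearMap.restrict_id_sub _ hp, LinearMap.restrict_id_sub _ hq, hfactor,
    LinearMap.det_smul, LinearMap.det_comp]
  ring

end Algebraic

section Normed

variable {V : Type*} [NormedAddCommGroup V] [NormedSpace ℝ V] [FiniteDimensional ℝ V]

theorem LinearMap.abs_det_le_pow_finrank {B : V →ₗ[ℝ] V} {r : ℝ} (hr : 0 ≤ r)
    (hB : ∀ x, ‖B x‖ ≤ r * ‖x‖) : |LinearMap.det B| ≤ r ^ finrank ℝ V := by
  borelize V
  let μ : Measure V := Measure.addHaar
  have hmaps : B '' closedBall 0 1 ⊆ closedBall 0 r := by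
    rintro _ ⟨x, hx, rfl⟩
    rw [mem_closedBall_zero_iff] at hx ⊢
    calc ‖B x‖ ≤ r * ‖x‖ := hB x
      _ ≤ r * 1 := by gcongr
      _ = r := mul_one r
  have hvol := measure_mono (μ := μ) hmaps
  rw [Measure.addHaar_image_linearMap, Measure.addHaar_closedBall' μ 0 hr] at hvol
  have h0 : μ (closedBall 0 1) ≠ 0 := (measure_closedBall_pos μ 0 one_pos).ne'
  have htop : μ (closedBall 0 1) ≠ ⊤ := (isCompact_closedBall 0 1).measure_lt_top.ne
  rwa [ENNReal.mul_le_mul_iff_left h0 htop, ENNReal.ofReal_le_ofReal_iff (by positivity)] at hvol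

theorem LinearMap.pow_finrank_le_abs_det {B : V →ₗ[ℝ] V} {s : ℝ} (hs : 0 < s)
    (hB : ∀ x, s * ‖x‖ ≤ ‖B x‖) : s ^ finrank ℝ V ≤ |LinearMap.det B| := by
  have hinj : Function.Injective B := by
    refine (injective_iff_map_eq_zero B).2 fun x hx => norm_le_zero_iff.1 ?_
    have := hB x
    rw [hx, norm_zero] at this
    nlinarith [norm_nonneg x]
  let e := LinearEquiv.ofInjectiveEndo B hinj
  have hinv : ∀ y, ‖(e.symm : V →ₗ[ℝ] V) y‖ ≤ s⁻¹ * ‖y‖ := fun y => by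
    have happly : B (e.symm y) = y := e.apply_symm_apply y
    have := hB (e.symm y)
    rw [happly] at this
    rwa [← div_eq_inv_mul, le_div_iff₀' hs]
  have hdet := LinearMap.abs_det_le_pow_finrank (by positivity) hinv
  have hBe : (e : V →ₗ[ℝ] V) = B := rfl
  have hpos : 0 < |LinearMap.det B| := abs_pos.2 (hBe ▸ e.isUnit_det'.ne_zero)
  rw [LinearEquiv.det_coe_symm, hBe, abs_inv, inv_pow] at hdet
  exact (inv_le_inv₀ hpos (by positivity)).1 hdet

theorem LinearMap.abs_det_id_sub_mem_Icc {A : V →ₗ[ℝ] V} {ε : ℝ} (hε₀ : 0 ≤ ε) (hε₁ : ε < 1)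
    (hA : ∀ x, ‖A x‖ ≤ ε * ‖x‖) :
    |LinearMap.det (LinearMap.id - A)| ∈
      Set.Icc ((1 - ε) ^ finrank ℝ V) ((1 + ε) ^ finrank ℝ V) := by
  refine ⟨LinearMap.pow_finrank_le_abs_det (by linarith) fun x => ?_,
    LinearMap.abs_det_le_pow_finrank (by linarith) fun x => ?_⟩
  · have := norm_sub_norm_le x (A x)
    simp only [LinearMap.sub_apply, LinearMap.id_apply]
    linarith [hA x]
  · have := norm_sub_le x (A x)
    simp only [LinearMap.sub_apply, LinearMap.id_apply]
    linarith [hA x]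

theorem abs_det_id_sub_mul_abs_det_id_sub_mem_Icc {p q : Submodule ℝ V} (hpq : IsCompl p q)
    {A : p →ₗ[ℝ] p} {B : q →ₗ[ℝ] q} {ε : ℝ} (hε₀ : 0 ≤ ε) (hε₁ : ε < 1)
    (hA : ∀ x, ‖A x‖ ≤ ε * ‖x‖) (hB : ∀ x, ‖B x‖ ≤ ε * ‖x‖) :
    |LinearMap.det (LinearMap.id - A)| * |LinearMap.det (LinearMap.id - B)| ∈
      Set.Icc ((1 - ε) ^ finrank ℝ V) ((1 + ε) ^ finrank ℝ V) := by
  obtain ⟨hA₁, hA₂⟩ := LinearMap.abs_det_id_sub_mem_Icc hε₀ hε₁ hA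
  obtain ⟨hB₁, hB₂⟩ := LinearMap.abs_det_id_sub_mem_Icc hε₀ hε₁ hB
  have : 0 ≤ 1 - ε := by linarith
  rw [← Submodule.finrank_add_eq_of_isCompl hpq, pow_add, pow_add]
  constructor <;> gcongr

end Normed

/-- If `P` is hyperbolic with contraction rate `ε < 1/(2 dim V)` on the stable
space and for the inverse on the unstable space, then `|det(Id − P)|⁻¹` is
comparable to `|det(P|_{E_u})|⁻¹`, with constants depending only on `dim V` and `ε`. -/
theorem stmt2 (n : ℕ) (ε : ℝ) (hε : 0 < ε) (hε' : ε < 1 / (2 * n)) :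
    ∃ c₁ C₁ : ℝ, 0 < c₁ ∧ c₁ ≤ C₁ ∧
      ∀ (V : Type) (_ : NormedAddCommGroup V) (_ : NormedSpace ℝ V),
        FiniteDimensional ℝ V → Module.finrank ℝ V = n →
        ∀ (Es Eu : Submodule ℝ V) (P : V ≃ₗ[ℝ] V)
          (hs : ∀ x ∈ Es, P.toLinearMap x ∈ Es)
          (hu : ∀ x ∈ Eu, P.toLinearMap x ∈ Eu),
          IsCompl Es Eu →
          (∀ x ∈ Es, ‖P.toLinearMap x‖ ≤ ε * ‖x‖) →
          (∀ x ∈ Eu, ‖P.symm.toLinearMap x‖ ≤ ε * ‖x‖) →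
          c₁ * |LinearMap.det (P.toLinearMap.restrict hu)|⁻¹ ≤
              |LinearMap.det (LinearMap.id - P.toLinearMap)|⁻¹ ∧
            |LinearMap.det (LinearMap.id - P.toLinearMap)|⁻¹ ≤
              C₁ * |LinearMap.det (P.toLinearMap.restrict hu)|⁻¹ := by
  have hε₁ : ε < 1 := by
    rcases Nat.eq_zero_or_pos n with rfl | hn
    · norm_num at hε'
      linarith
    · calc ε < 1 / (2 * n) := hε'
        _ ≤ 1 / 2 := by gcongr; norm_cast; omega
        _ < 1 := by norm_num
  refine ⟨((1 + ε) ^ n)⁻¹, ((1 - ε) ^ n)⁻¹, by positivity, ?_, ?_⟩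
  · have : 0 < 1 - ε := by linarith
    gcongr
    linarith
  intro V _ _ _ hn Es Eu P hs hu hcompl hPs hPu
  have hu' := P.forall_symm_mem_of_forall_mem hu
  obtain ⟨hlower, hupper⟩ := abs_det_id_sub_mul_abs_det_id_sub_mem_Icc hcompl hε.le hε₁
    (A := P.toLinearMap.restrict hs) (B := P.symm.toLinearMap.restrict hu')
    (fun x => hPs x x.2) (fun x => hPu x x.2)
  rw [hn] at hlower hupper
  have hpos := (pow_pos (sub_pos.2 hε₁) n).trans_le hlower
  rw [P.det_id_sub_eq_of_isCompl hcompl hs hu hu', abs_mul, abs_mul, abs_mul, abs_pow, abs_neg,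
    abs_one, one_pow, one_mul, mul_inv, mul_comm _ (|LinearMap.det (P.toLinearMap.restrict hu)|⁻¹),
    mul_comm _ (|LinearMap.det (P.toLinearMap.restrict hu)|⁻¹)]
  constructor <;> gcongr
end

section
/- Let (a_n) be a sequence of nonnegative reals and (T_n) a strictly increasing sequence of positive reals tending to infinity, and suppose the Dirichlet series ∑_n a_n e^{−s T_n} has finite abscissa of convergence b with b < 0. Then for every sufficiently small ε > 0 there exists a sequence t_j → ∞ such that for all j, ∑_{n : t_j − 1/2 ≤ T_n ≤ t_j + 1/2} a_n ≥ e^{(b − 2ε) t_j}. -/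
open Filter
open scoped ENNReal

/-- If a Dirichlet series `∑ aₙ e^{−s Tₙ}` with nonnegative coefficients has
(finite) abscissa of convergence `b < 0`, then for every sufficiently small
`ε > 0` there is a sequence `t_j → ∞` with
`∑_{t_j − 1/2 ≤ Tₙ ≤ t_j + 1/2} aₙ ≥ e^{(b − 2ε) t_j}` for all `j`. -/
theorem stmt3 (a T : ℕ → ℝ) (ha : ∀ n, 0 ≤ a n) (hT : StrictMono T)
    (hTpos : ∀ n, 0 < T n) (hTtop : Tendsto T atTop atTop) (b : ℝ)
    (hb : IsGLB {s : ℝ | Summable fun n => a n * Real.exp (-s * T n)} b)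
    (hbneg : b < 0) :
    ∃ ε₀ > 0, ∀ ε : ℝ, 0 < ε → ε < ε₀ →
      ∃ t : ℕ → ℝ, Tendsto t atTop atTop ∧
        ∀ j, Real.exp ((b - 2 * ε) * t j) ≤
          ∑' n : {n : ℕ // t j - 1 / 2 ≤ T n ∧ T n ≤ t j + 1 / 2}, a n := by
  refine ⟨1, one_pos, fun ε hε _ => ?_⟩
  by_contra hcon
  obtain ⟨M, hM⟩ : ∃ M : ℕ, ∀ t : ℝ, (M : ℝ) ≤ t →
      (∑' n : {n : ℕ // t - 1 / 2 ≤ T n ∧ T n ≤ t + 1 / 2}, a n)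
        < Real.exp ((b - 2 * ε) * t) := by
    by_contra h
    push_neg at h
    choose t ht1 ht2 using h
    exact hcon ⟨t, tendsto_atTop_mono ht1 tendsto_natCast_atTop_atTop, ht2⟩
  have hsneg : b - ε < 0 := by linarith
  -- finiteness of sublevel sets of T
  have hfinle : ∀ c : ℝ, {n : ℕ | T n ≤ c}.Finite := by
    intro c
    obtain ⟨N, hN⟩ := Filter.eventually_atTop.mp (hTtop.eventually_gt_atTop c)
    refine (Set.finite_Iio N).subset fun n hn => ?_
    by_contra hlt
    exact absurd (hN n (le_of_not_gt hlt)) (not_lt.mpr hn)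
  have hWsum : ∀ t : ℝ,
      Summable fun n : {n : ℕ // t - 1 / 2 ≤ T n ∧ T n ≤ t + 1 / 2} => a n := by
    intro t
    have hfin : {n : ℕ | t - 1 / 2 ≤ T n ∧ T n ≤ t + 1 / 2}.Finite :=
      (hfinle (t + 1 / 2)).subset fun n hn => hn.2
    haveI : Finite {n : ℕ // t - 1 / 2 ≤ T n ∧ T n ≤ t + 1 / 2} := hfin.to_subtype
    exact Summable.of_finite
  -- the half-integer index
  set K : ℕ → ℕ := fun n => (⌈2 * T n⌉).toNat with hK
  have hKcast : ∀ n, (K n : ℝ) = ((⌈2 * T n⌉ : ℤ) : ℝ) := by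
    intro n
    have h0 : (0 : ℤ) ≤ ⌈2 * T n⌉ := Int.ceil_nonneg (by linarith [hTpos n])
    rw [hK]
    exact_mod_cast Int.toNat_of_nonneg h0
  have hKle : ∀ n, 2 * T n ≤ (K n : ℝ) := fun n => by
    rw [hKcast]; exact Int.le_ceil _
  have hKgt : ∀ n, (K n : ℝ) - 1 < 2 * T n := fun n => by
    rw [hKcast]
    have := Int.ceil_lt_add_one (2 * T n)
    linarith
  have hfibsub : ∀ k : ℕ, {n : ℕ | K n = k} ⊆
      {n : ℕ | (k : ℝ) / 2 - 1 / 2 ≤ T n ∧ T n ≤ (k : ℝ) / 2 + 1 / 2} := by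
    intro k n hn
    have hn' : K n = k := hn
    constructor
    · have := hKgt n; rw [hn'] at this; linarith
    · have := hKle n; rw [hn'] at this; linarith
  set gE : ℕ → ℝ≥0∞ := fun n => ENNReal.ofReal (a n * Real.exp (-(b - ε) * T n)) with hgE
  set Sfib : ℕ → ℝ≥0∞ := fun k => ∑' n : {n : ℕ // K n = k}, gE n with hSfib
  -- per-fiber estimate
  have hSle : ∀ k : ℕ, Sfib k ≤ ENNReal.ofReal (Real.exp (-(b - ε) * ((k : ℝ) / 2))) *
      ENNReal.ofReal (∑' n : {n : ℕ // (k : ℝ) / 2 - 1 / 2 ≤ T n ∧ T n ≤ (k : ℝ) / 2 + 1 / 2},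
        a n) := by
    intro k
    have step1 : Sfib k ≤ ∑' n : {n : ℕ // K n = k},
        ENNReal.ofReal (Real.exp (-(b - ε) * ((k : ℝ) / 2)) * a n.1) := by
      refine ENNReal.tsum_le_tsum fun n => ENNReal.ofReal_le_ofReal ?_
      have hTn : T n.1 ≤ (k : ℝ) / 2 := by
        have := hKle n.1; rw [n.2] at this; linarith
      have hexp : Real.exp (-(b - ε) * T n.1) ≤ Real.exp (-(b - ε) * ((k : ℝ) / 2)) := by
        apply Real.exp_le_exp.mpr
        nlinarith
      calc a n.1 * Real.exp (-(b - ε) * T n.1)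
          ≤ a n.1 * Real.exp (-(b - ε) * ((k : ℝ) / 2)) :=
            mul_le_mul_of_nonneg_left hexp (ha _)
        _ = Real.exp (-(b - ε) * ((k : ℝ) / 2)) * a n.1 := mul_comm _ _
    have step2 : (∑' n : {n : ℕ // K n = k},
        ENNReal.ofReal (Real.exp (-(b - ε) * ((k : ℝ) / 2)) * a n.1))
        = ENNReal.ofReal (Real.exp (-(b - ε) * ((k : ℝ) / 2))) *
          ∑' n : {n : ℕ // K n = k}, ENNReal.ofReal (a n.1) := by
      rw [← ENNReal.tsum_mul_left]
      exact tsum_congr fun n => ENNReal.ofReal_mul (Real.exp_nonneg _)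
    have step3 : (∑' n : {n : ℕ // K n = k}, ENNReal.ofReal (a n.1))
        ≤ ∑' n : {n : ℕ // (k : ℝ) / 2 - 1 / 2 ≤ T n ∧ T n ≤ (k : ℝ) / 2 + 1 / 2},
            ENNReal.ofReal (a n.1) := by
      have e1 : (∑' n : {n : ℕ // K n = k}, ENNReal.ofReal (a n.1))
          = ∑' n : ℕ, ({n : ℕ | K n = k}).indicator (fun m => ENNReal.ofReal (a m)) n :=
        tsum_subtype {n : ℕ | K n = k} (fun m => ENNReal.ofReal (a m))
      have e2 : (∑' n : {n : ℕ // (k : ℝ) / 2 - 1 / 2 ≤ T n ∧ T n ≤ (k : ℝ) / 2 + 1 / 2},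
          ENNReal.ofReal (a n.1))
          = ∑' n : ℕ, ({n : ℕ | (k : ℝ) / 2 - 1 / 2 ≤ T n ∧ T n ≤ (k : ℝ) / 2 + 1 / 2}).indicator
              (fun m => ENNReal.ofReal (a m)) n :=
        tsum_subtype _ (fun m => ENNReal.ofReal (a m))
      rw [e1, e2]
      exact ENNReal.tsum_le_tsum fun n =>
        Set.indicator_le_indicator_of_subset (hfibsub k) (fun m => zero_le) n
    have step4 : (∑' n : {n : ℕ // (k : ℝ) / 2 - 1 / 2 ≤ T n ∧ T n ≤ (k : ℝ) / 2 + 1 / 2},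
        ENNReal.ofReal (a n.1))
        = ENNReal.ofReal (∑' n : {n : ℕ // (k : ℝ) / 2 - 1 / 2 ≤ T n ∧
            T n ≤ (k : ℝ) / 2 + 1 / 2}, a n.1) :=
      (ENNReal.ofReal_tsum_of_nonneg (fun n => ha _) (hWsum ((k : ℝ) / 2))).symm
    calc Sfib k ≤ _ := step1
      _ = _ := step2
      _ ≤ ENNReal.ofReal (Real.exp (-(b - ε) * ((k : ℝ) / 2))) *
          ∑' n : {n : ℕ // (k : ℝ) / 2 - 1 / 2 ≤ T n ∧ T n ≤ (k : ℝ) / 2 + 1 / 2},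
            ENNReal.ofReal (a n.1) := mul_le_mul_right step3 _
      _ = _ := by rw [step4]
  have hSne : ∀ k, Sfib k ≠ ⊤ := fun k =>
    ne_top_of_le_ne_top (ENNReal.mul_ne_top ENNReal.ofReal_ne_top ENNReal.ofReal_ne_top)
      (hSle k)
  -- geometric bound for large k
  have hgeo : ∀ k : ℕ, 2 * M ≤ k →
      Sfib k ≤ ENNReal.ofReal (Real.exp (-(ε / 2))) ^ k := by
    intro k hk
    have hMk : (M : ℝ) ≤ (k : ℝ) / 2 := by
      have : (2 * M : ℝ) ≤ (k : ℝ) := by exact_mod_cast hk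
      linarith
    have hwin := hM ((k : ℝ) / 2) hMk
    calc Sfib k ≤ _ := hSle k
      _ ≤ ENNReal.ofReal (Real.exp (-(b - ε) * ((k : ℝ) / 2))) *
          ENNReal.ofReal (Real.exp ((b - 2 * ε) * ((k : ℝ) / 2))) :=
        mul_le_mul_right (ENNReal.ofReal_le_ofReal hwin.le) _
      _ = ENNReal.ofReal (Real.exp (-(b - ε) * ((k : ℝ) / 2)) *
          Real.exp ((b - 2 * ε) * ((k : ℝ) / 2))) :=
        (ENNReal.ofReal_mul (Real.exp_nonneg _)).symm
      _ = ENNReal.ofReal (Real.exp (-(ε / 2)) ^ k) := by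
        rw [← Real.exp_add, ← Real.exp_nat_mul]
        congr 1
        ring
      _ = ENNReal.ofReal (Real.exp (-(ε / 2))) ^ k :=
        ENNReal.ofReal_pow (Real.exp_nonneg _) k
  have hx1 : ENNReal.ofReal (Real.exp (-(ε / 2))) < 1 :=
    ENNReal.ofReal_lt_one.mpr (Real.exp_lt_one_iff.mpr (by linarith))
  -- the sigma decomposition
  have h1 : ∑' n, gE n = ∑' k, Sfib k := by
    rw [← (Equiv.sigmaFiberEquiv K).tsum_eq gE]
    exact ENNReal.tsum_sigma' _
  -- total sum is finite
  have hfin : ∑' n, gE n ≠ ⊤ := by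
    rw [h1, ← Summable.tsum_add_tsum_compl (s := (↑(Finset.range (2 * M)) : Set ℕ))
      ENNReal.summable ENNReal.summable]
    refine ENNReal.add_ne_top.mpr ⟨?_, ?_⟩
    · have e : (∑' x : ↑(↑(Finset.range (2 * M)) : Set ℕ), Sfib x.1)
          = ∑ k ∈ Finset.range (2 * M), Sfib k := Finset.tsum_subtype _ _
      rw [e]
      exact ENNReal.sum_ne_top.mpr fun k _ => hSne k
    · have h2 : (∑' k : ↑((↑(Finset.range (2 * M)) : Set ℕ)ᶜ), Sfib k)
          ≤ ∑' k : ↑((↑(Finset.range (2 * M)) : Set ℕ)ᶜ),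
            ENNReal.ofReal (Real.exp (-(ε / 2))) ^ (k : ℕ) := by
        refine ENNReal.tsum_le_tsum fun k => hgeo k.1 ?_
        have := k.2
        simp only [Set.mem_compl_iff, Finset.coe_range, Set.mem_Iio, not_lt] at this
        exact this
      have h3 : (∑' k : ↑((↑(Finset.range (2 * M)) : Set ℕ)ᶜ),
            ENNReal.ofReal (Real.exp (-(ε / 2))) ^ (k : ℕ))
          ≤ ∑' k : ℕ, ENNReal.ofReal (Real.exp (-(ε / 2))) ^ k := by
        have e : (∑' k : ↑((↑(Finset.range (2 * M)) : Set ℕ)ᶜ),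
            ENNReal.ofReal (Real.exp (-(ε / 2))) ^ (k : ℕ))
            = ∑' k : ℕ, ((↑(Finset.range (2 * M)) : Set ℕ)ᶜ).indicator
                (fun k => ENNReal.ofReal (Real.exp (-(ε / 2))) ^ k) k :=
          tsum_subtype _ _
        rw [e]
        exact ENNReal.tsum_le_tsum fun k => Set.indicator_le_self _ _ k
      have h4 : (∑' k : ℕ, ENNReal.ofReal (Real.exp (-(ε / 2))) ^ k) ≠ ⊤ := by
        rw [ENNReal.tsum_geometric]
        exact ENNReal.inv_ne_top.mpr (tsub_pos_of_lt hx1).ne'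
      exact ne_top_of_le_ne_top h4 (h2.trans h3)
  -- conclude summability at b - ε
  have hsum : Summable fun n => a n * Real.exp (-(b - ε) * T n) := by
    refine (ENNReal.summable_toReal hfin).congr fun n => ?_
    rw [hgE]
    exact ENNReal.toReal_ofReal (mul_nonneg (ha n) (Real.exp_nonneg _))
  have hble : b ≤ b - ε := hb.1 hsum
  linarith
end

section
/- Let (a_n) be a sequence of nonnegative reals and (T_n) a strictly increasing sequence of positive reals tending to infinity, and suppose the Dirichlet series ∑_n a_n e^{−s T_n} has abscissa of convergence b with b > 0. Then for every sufficiently small ε > 0 there exists a sequence t_j → ∞ such that for all j, ∑_{n : t_j − 1/2 ≤ T_n ≤ t_j + 1/2} a_n ≥ e^{(b − 2ε) t_j}. -/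
open Filter

/-- If a Dirichlet series `∑ aₙ e^{−s Tₙ}` with nonnegative coefficients has
(finite) abscissa of convergence `b > 0`, then for every sufficiently small
`ε > 0` there is a sequence `t_j → ∞` with
`∑_{t_j − 1/2 ≤ Tₙ ≤ t_j + 1/2} aₙ ≥ e^{(b − 2ε) t_j}` for all `j`. -/
theorem stmt4 (a T : ℕ → ℝ) (ha : ∀ n, 0 ≤ a n) (hT : StrictMono T)
    (hTpos : ∀ n, 0 < T n) (hTtop : Tendsto T atTop atTop) (b : ℝ)
    (hb : IsGLB {s : ℝ | Summable fun n => a n * Real.exp (-s * T n)} b)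
    (hbpos : 0 < b) :
    ∃ ε₀ > 0, ∀ ε : ℝ, 0 < ε → ε < ε₀ →
      ∃ t : ℕ → ℝ, Tendsto t atTop atTop ∧
        ∀ j, Real.exp ((b - 2 * ε) * t j) ≤
          ∑' n : {n : ℕ // t j - 1 / 2 ≤ T n ∧ T n ≤ t j + 1 / 2}, a n := by
  -- finiteness of sublevel sets of T
  have hfin : ∀ C : ℝ, {n : ℕ | T n ≤ C}.Finite := by
    intro C
    obtain ⟨N, hN⟩ := (hTtop.eventually (eventually_gt_atTop C)).exists_forall_of_atTop
    exact (Set.finite_lt_nat N).subset fun n hn => by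
      by_contra h
      exact absurd (hN n (le_of_not_gt h)) (not_lt.2 hn.out)
  have hwfin : ∀ t : ℝ, {n : ℕ | t - 1/2 ≤ T n ∧ T n ≤ t + 1/2}.Finite := fun t =>
    (hfin (t + 1/2)).subset fun n hn => hn.2
  -- tsum over a window equals finite sum
  have htsum : ∀ t : ℝ, (∑' n : {n : ℕ // t - 1/2 ≤ T n ∧ T n ≤ t + 1/2}, a n)
      = ∑ n ∈ (hwfin t).toFinset, a n := by
    intro t
    refine (tsum_subtype {n : ℕ | t - 1/2 ≤ T n ∧ T n ≤ t + 1/2} a).trans ?_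
    rw [tsum_eq_sum (s := (hwfin t).toFinset) (fun n hn => Set.indicator_of_notMem
        (by simpa using hn) a)]
    exact Finset.sum_congr rfl fun n hn => Set.indicator_of_mem (by simpa using hn) a
  refine ⟨b, hbpos, fun ε hε hεb => ?_⟩
  have key : ∀ M : ℝ, ∃ t : ℝ, M ≤ t ∧ Real.exp ((b - 2 * ε) * t) ≤
      ∑' n : {n : ℕ // t - 1/2 ≤ T n ∧ T n ≤ t + 1/2}, a n := by
    intro M
    by_contra hcon
    push_neg at hcon
    set s : ℝ := b - ε with hs
    have hspos : 0 < s := by simp [hs]; linarith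
    -- show summability at s
    have hsum : Summable fun n => a n * Real.exp (-s * T n) := by
      set κ : ℕ → ℕ := fun n => ⌊T n + 1/2⌋₊ with hκ
      have hκ1 : ∀ n, (κ n : ℝ) - 1/2 ≤ T n := fun n => by
        have := Nat.floor_le (R := ℝ) (a := T n + 1/2) (by linarith [hTpos n])
        simpa [hκ] using by linarith
      have hκ2 : ∀ n, T n ≤ (κ n : ℝ) + 1/2 := fun n => by
        have := Nat.lt_floor_add_one (R := ℝ) (T n + 1/2)
        simpa [hκ] using by linarith
      set u : ℕ → ℝ := fun k => Real.exp (s/2 - s * k) * ∑ n ∈ (hwfin k).toFinset, a n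
        with hu
      have hu0 : ∀ k, 0 ≤ u k := fun k => by
        apply mul_nonneg (Real.exp_nonneg _)
        exact Finset.sum_nonneg fun n _ => ha n
      have husum : Summable u := by
        set N₀ : ℕ := ⌈M⌉₊ with hN₀
        rw [← summable_nat_add_iff N₀]
        have hgeo : Summable fun k : ℕ => Real.exp (s/2) * Real.exp (-ε) ^ k :=
          (summable_geometric_of_lt_one (Real.exp_nonneg _)
            (Real.exp_lt_one_iff.2 (by linarith))).mul_left _
        refine hgeo.of_nonneg_of_le (fun k => hu0 _) fun k => ?_
        have hM : M ≤ ((k + N₀ : ℕ) : ℝ) := le_trans (Nat.le_ceil M)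
          (by exact_mod_cast Nat.le_add_left N₀ k)
        have hw := hcon ((k + N₀ : ℕ) : ℝ) hM
        rw [htsum] at hw
        calc u (k + N₀) ≤ Real.exp (s/2 - s * (k + N₀ : ℕ)) *
              Real.exp ((b - 2*ε) * ((k + N₀ : ℕ) : ℝ)) := by
              exact mul_le_mul_of_nonneg_left hw.le (Real.exp_nonneg _)
          _ = Real.exp (s/2) * Real.exp (-ε * ((k + N₀ : ℕ) : ℝ)) := by
              rw [← Real.exp_add, ← Real.exp_add, hs]; ring_nf
          _ ≤ Real.exp (s/2) * Real.exp (-ε) ^ k := by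
              refine mul_le_mul_of_nonneg_left ?_ (Real.exp_nonneg _)
              rw [← Real.exp_nat_mul]
              apply Real.exp_le_exp.2
              push_cast
              nlinarith [hε.le, (Nat.cast_nonneg N₀ : (0:ℝ) ≤ N₀)]
      refine summable_of_sum_range_le
        (fun n => mul_nonneg (ha n) (Real.exp_nonneg _)) (c := ∑' k, u k) fun N => ?_
      set K : ℕ := (Finset.range N).sup κ + 1 with hK
      have hmaps : ∀ n ∈ Finset.range N, κ n ∈ Finset.range K := fun n hn =>
        Finset.mem_range.2 (Nat.lt_succ_of_le (Finset.le_sup hn))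
      rw [← Finset.sum_fiberwise_of_maps_to hmaps]
      refine le_trans (Finset.sum_le_sum fun k _ => ?_)
        (Summable.sum_le_tsum _ (fun k _ => hu0 k) husum)
      -- inner sum ≤ u k
      calc ∑ n ∈ Finset.filter (fun n => κ n = k) (Finset.range N),
            a n * Real.exp (-s * T n)
          ≤ ∑ n ∈ Finset.filter (fun n => κ n = k) (Finset.range N),
            a n * Real.exp (s/2 - s * k) := by
            refine Finset.sum_le_sum fun n hn => ?_
            have hk : κ n = k := (Finset.mem_filter.1 hn).2
            refine mul_le_mul_of_nonneg_left (Real.exp_le_exp.2 ?_) (ha n)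
            have := hκ1 n
            rw [hk] at this
            nlinarith [hspos.le]
        _ = Real.exp (s/2 - s * k) *
            ∑ n ∈ Finset.filter (fun n => κ n = k) (Finset.range N), a n := by
            rw [Finset.mul_sum]; exact Finset.sum_congr rfl fun n _ => mul_comm _ _
        _ ≤ u k := by
            refine mul_le_mul_of_nonneg_left ?_ (Real.exp_nonneg _)
            refine Finset.sum_le_sum_of_subset_of_nonneg ?_ fun n _ _ => ha n
            intro n hn
            have hk : κ n = k := (Finset.mem_filter.1 hn).2
            have h1 := hκ1 n; have h2 := hκ2 n
            rw [hk] at h1 h2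
            simp only [Set.Finite.mem_toFinset, Set.mem_setOf_eq]
            exact ⟨h1, h2⟩
    have := hb.1 hsum
    linarith [hb.1 hsum]
  choose t ht1 ht2 using fun m : ℕ => key m
  exact ⟨t, tendsto_atTop_mono ht1 tendsto_natCast_atTop_atTop, ht2⟩
end

section
/- Let F, G be holomorphic functions on a right half-plane {Re s > σ_0} that extend meromorphically to ℂ, and suppose F is given for Re s ≫ 1 by a Dirichlet series with nonnegative coefficients with abscissa of convergence a ∈ ℝ, and G by a Dirichlet series with nonnegative coefficients with abscissa of convergence a' ∈ ℝ. If the difference H = G − F extends holomorphically to {Re s ≥ a} and a' < a, then F has no pole at s = a; but by Landau's theorem F has a singularity at its abscissa of convergence a. Hence a' < a is impossible and a' = a whenever a' ≤ a and H is holomorphic on {Re s ≥ a}. -/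
open Filter

/-- upward closure of the convergence set -/
lemma landau_upward {c lam : ℕ → ℝ} (hc : ∀ n, 0 ≤ c n)
    (hlt : Tendsto lam atTop atTop) {σ' σ : ℝ}
    (h : Summable fun n => c n * Real.exp (-σ' * lam n)) (hle : σ' ≤ σ) :
    Summable fun n => c n * Real.exp (-σ * lam n) := by
  apply Summable.of_norm_bounded_eventually_nat h
  filter_upwards [hlt.eventually_ge_atTop 0] with n hn
  rw [Real.norm_eq_abs,
    abs_of_nonneg (mul_nonneg (hc n) (Real.exp_pos _).le)]
  have : -σ * lam n ≤ -σ' * lam n :=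
    mul_le_mul_of_nonneg_right (neg_le_neg hle) hn
  exact mul_le_mul_of_nonneg_left (Real.exp_le_exp.mpr this) (hc n)

lemma landau_glb {c lam : ℕ → ℝ} (hc : ∀ n, 0 ≤ c n)
    (hlt : Tendsto lam atTop atTop) {a : ℝ}
    (ha : IsGLB {s : ℝ | Summable fun n => c n * Real.exp (-s * lam n)} a)
    {σ : ℝ} (h : a < σ) :
    Summable fun n => c n * Real.exp (-σ * lam n) := by
  obtain ⟨σ', hσ'S, hσ'⟩ :
      ∃ σ' ∈ {s : ℝ | Summable fun n => c n * Real.exp (-s * lam n)}, σ' < σ := by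
    by_contra hcon
    push_neg at hcon
    exact absurd (ha.2 fun t ht => hcon t ht) (not_le.mpr h)
  exact landau_upward hc hlt hσ'S hσ'.le

/-- polynomially weighted summability strictly to the right of the abscissa -/
lemma landau_poly {c lam : ℕ → ℝ} (hc : ∀ n, 0 ≤ c n)
    (hlt : Tendsto lam atTop atTop) {a : ℝ}
    (hS : ∀ σ : ℝ, a < σ → Summable fun n => c n * Real.exp (-σ * lam n))
    {σ : ℝ} (hσ : a < σ) (k : ℕ) :
    Summable fun n => c n * |lam n| ^ k * Real.exp (-σ * lam n) := by
  set σ' : ℝ := (a + σ) / 2 with hσ'def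
  have h1 : a < σ' := by simp only [hσ'def]; linarith
  have h2 : σ' < σ := by simp only [hσ'def]; linarith
  apply Summable.of_norm_bounded_eventually_nat (hS σ' h1)
  have hev : Tendsto (fun n => (lam n) ^ k * Real.exp (-(σ - σ') * lam n)) atTop (nhds 0) := by
    have hε : (0:ℝ) < σ - σ' := by linarith
    have base : Tendsto (fun x : ℝ => x ^ k * Real.exp (-x)) atTop (nhds 0) :=
      Real.tendsto_pow_mul_exp_neg_atTop_nhds_zero k
    have hmul : Tendsto (fun x : ℝ => (σ - σ') * x) atTop atTop :=
      Tendsto.const_mul_atTop hε tendsto_id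
    have comp : Tendsto (fun x : ℝ => ((σ - σ') * x) ^ k * Real.exp (-((σ - σ') * x)))
        atTop (nhds 0) := base.comp hmul
    have := comp.comp hlt
    have h3 : Tendsto (fun n => ((σ - σ')⁻¹) ^ k *
        (((σ - σ') * lam n) ^ k * Real.exp (-((σ - σ') * lam n)))) atTop (nhds 0) := by
      simpa using this.const_mul (((σ - σ')⁻¹) ^ k)
    refine h3.congr fun n => ?_
    have hcan : (σ - σ')⁻¹ ^ k * ((σ - σ') * lam n) ^ k = lam n ^ k := by
      rw [← mul_pow, ← mul_assoc, inv_mul_cancel₀ (ne_of_gt hε), one_mul]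
    rw [neg_mul, ← mul_assoc, hcan]
  filter_upwards [hev.eventually (eventually_le_nhds (by norm_num : (0:ℝ) < 1)),
    hlt.eventually_ge_atTop 0] with n hn hn0
  rw [Real.norm_eq_abs,
    abs_of_nonneg (mul_nonneg (mul_nonneg (hc n) (pow_nonneg (abs_nonneg _) k))
      (Real.exp_pos _).le)]
  have hexp : Real.exp (-σ * lam n) = Real.exp (-σ' * lam n) * Real.exp (-(σ - σ') * lam n) := by
    rw [← Real.exp_add]; ring_nf
  rw [hexp, abs_of_nonneg hn0]
  calc c n * lam n ^ k * (Real.exp (-σ' * lam n) * Real.exp (-(σ - σ') * lam n))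
      = (c n * Real.exp (-σ' * lam n)) * (lam n ^ k * Real.exp (-(σ - σ') * lam n)) := by ring
    _ ≤ (c n * Real.exp (-σ' * lam n)) * 1 := by
        apply mul_le_mul_of_nonneg_left hn
          (mul_nonneg (hc n) (Real.exp_pos _).le)
    _ = c n * Real.exp (-σ' * lam n) := mul_one _
open Filter

noncomputable def landauFF (c lam : ℕ → ℝ) (k : ℕ) (s : ℂ) : ℂ :=
  ∑' n, (c n : ℂ) * (-(lam n : ℂ)) ^ k * Complex.exp (-s * lam n)

lemma landau_norm_term (c lam : ℕ → ℝ) (hc : ∀ n, 0 ≤ c n) (k : ℕ) (s : ℂ) (n : ℕ) :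
    ‖(c n : ℂ) * (-(lam n : ℂ)) ^ k * Complex.exp (-s * lam n)‖
      = c n * |lam n| ^ k * Real.exp (-s.re * lam n) := by
  rw [norm_mul, norm_mul, norm_pow]
  congr 1
  · congr 1
    · rw [Complex.norm_real, Real.norm_eq_abs, abs_of_nonneg (hc n)]
    · rw [norm_neg, Complex.norm_real, Real.norm_eq_abs]
  · rw [Complex.norm_exp]
    congr 1
    simp [Complex.mul_re]

lemma landau_summable_term {c lam : ℕ → ℝ} (hc : ∀ n, 0 ≤ c n)
    (hlt : Tendsto lam atTop atTop) {a : ℝ}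
    (hS : ∀ σ : ℝ, a < σ → Summable fun n => c n * Real.exp (-σ * lam n))
    (k : ℕ) {s : ℂ} (hs : a < s.re) :
    Summable fun n => (c n : ℂ) * (-(lam n : ℂ)) ^ k * Complex.exp (-s * lam n) := by
  apply Summable.of_norm
  have := landau_poly hc hlt hS hs k
  exact this.congr fun n => (landau_norm_term c lam hc k s n).symm

lemma landau_hasDerivAt {c lam : ℕ → ℝ} (hc : ∀ n, 0 ≤ c n)
    (hlt : Tendsto lam atTop atTop) {a : ℝ}
    (hS : ∀ σ : ℝ, a < σ → Summable fun n => c n * Real.exp (-σ * lam n))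
    (k : ℕ) {s : ℂ} (hs : a < s.re) :
    HasDerivAt (landauFF c lam k) (landauFF c lam (k + 1) s) s := by
  set σ : ℝ := (a + s.re) / 2 with hσdef
  have hσ1 : a < σ := by simp only [hσdef]; linarith
  have hσ2 : σ < s.re := by simp only [hσdef]; linarith
  set T : ℝ := s.re + 1 with hTdef
  have hσT : σ < T := by simp only [hTdef]; linarith
  set t : Set ℂ := {z : ℂ | σ < z.re} ∩ {z : ℂ | z.re < T} with htdef
  have ht : IsOpen t :=
    (isOpen_lt continuous_const Complex.continuous_re).inter
      (isOpen_lt Complex.continuous_re continuous_const)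
  have h't : IsPreconnected t :=
    ((convex_halfSpace_re_gt σ).inter (convex_halfSpace_re_lt T)).isPreconnected
  have hu : Summable fun n =>
      c n * |lam n| ^ (k + 1) * (Real.exp (-σ * lam n) + Real.exp (-T * lam n)) := by
    have h1 := landau_poly hc hlt hS hσ1 (k + 1)
    have hsT : s.re < T := by rw [hTdef]; linarith
    have h2 := landau_poly hc hlt hS (lt_trans hs hsT) (k + 1)
    exact (h1.add h2).congr fun n => by ring
  have key := hasDerivAt_tsum_of_isPreconnected hu ht h't
    (g := fun n z => (c n : ℂ) * (-(lam n : ℂ)) ^ k * Complex.exp (-z * lam n))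
    (g' := fun n z => (c n : ℂ) * (-(lam n : ℂ)) ^ (k + 1) * Complex.exp (-z * lam n))
    (fun n y _ => by
      have h0 : HasDerivAt (fun z : ℂ => -z * (lam n : ℂ)) (-(lam n : ℂ)) y := by
        simpa using (hasDerivAt_id y).neg.mul_const (lam n : ℂ)
      have h1 := h0.cexp
      have h2 := h1.const_mul ((c n : ℂ) * (-(lam n : ℂ)) ^ k)
      exact h2.congr_deriv (by ring))
    (fun n y hy => by
      rw [landau_norm_term c lam hc (k + 1) y n]
      have hy1 : σ < y.re := hy.1
      have hy2 : y.re < T := hy.2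
      have hexp : Real.exp (-y.re * lam n)
          ≤ Real.exp (-σ * lam n) + Real.exp (-T * lam n) := by
        rcases le_or_gt 0 (lam n) with h | h
        · calc Real.exp (-y.re * lam n) ≤ Real.exp (-σ * lam n) :=
                Real.exp_le_exp.mpr (mul_le_mul_of_nonneg_right (neg_le_neg hy1.le) h)
            _ ≤ _ := le_add_of_nonneg_right (Real.exp_pos _).le
        · calc Real.exp (-y.re * lam n) ≤ Real.exp (-T * lam n) := by
                apply Real.exp_le_exp.mpr
                nlinarith
            _ ≤ _ := le_add_of_nonneg_left (Real.exp_pos _).le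
      exact mul_le_mul_of_nonneg_left hexp
        (mul_nonneg (hc n) (pow_nonneg (abs_nonneg _) _)))
    (y₀ := ((σ + T) / 2 : ℝ))
    (by constructor <;> · simp only [htdef, Set.mem_setOf_eq, Complex.ofReal_re]; linarith)
    (by
      apply landau_summable_term hc hlt hS k
      rw [Complex.ofReal_re]; linarith)
    ⟨hσ2, by simp only [htdef, Set.mem_setOf_eq, hTdef]; linarith⟩
  exact key


/-- Landau-type argument: if `F` and `G` are Dirichlet series with nonnegative
coefficients and abscissas of convergence `a` and `a'` respectively, and the
difference `H = G − F` extends holomorphically to an open set containing the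
closed half-plane `{Re s ≥ a}`, then `a' ≤ a` forces `a' = a`. -/
theorem stmt12 (c c' lam lam' : ℕ → ℝ)
    (hc : ∀ n, 0 ≤ c n) (hc' : ∀ n, 0 ≤ c' n)
    (hlam : StrictMono lam) (hlam' : StrictMono lam')
    (hlamtop : Filter.Tendsto lam Filter.atTop Filter.atTop)
    (hlamtop' : Filter.Tendsto lam' Filter.atTop Filter.atTop)
    (a a' : ℝ)
    (ha : IsGLB {s : ℝ | Summable fun n => c n * Real.exp (-s * lam n)} a)
    (ha' : IsGLB {s : ℝ | Summable fun n => c' n * Real.exp (-s * lam' n)} a')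
    (U : Set ℂ) (hU : IsOpen U) (hUa : {s : ℂ | a ≤ s.re} ⊆ U)
    (H : ℂ → ℂ) (hH : DifferentiableOn ℂ H U)
    (hHeq : ∀ s : ℂ, a < s.re →
      H s = (∑' n, (c' n : ℂ) * Complex.exp (-s * lam' n)) -
        ∑' n, (c n : ℂ) * Complex.exp (-s * lam n))
    (hle : a' ≤ a) :
    a' = a := by
  by_contra hne
  have hlta : a' < a := lt_of_le_of_ne hle hne
  have hS : ∀ σ : ℝ, a < σ → Summable fun n => c n * Real.exp (-σ * lam n) :=
    fun σ h => landau_glb hc hlamtop ha h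
  have hS' : ∀ σ : ℝ, a' < σ → Summable fun n => c' n * Real.exp (-σ * lam' n) :=
    fun σ h => landau_glb hc' hlamtop' ha' h
  obtain ⟨N, hN⟩ : ∃ N : ℕ, ∀ n, N ≤ n → 0 ≤ lam n :=
    eventually_atTop.mp (hlamtop.eventually_ge_atTop 0)
  set c2 : ℕ → ℝ := fun n => c (n + N) with hc2def
  set lam2 : ℕ → ℝ := fun n => lam (n + N) with hlam2def
  have hc2 : ∀ n, 0 ≤ c2 n := fun n => hc _
  have hlam2nn : ∀ n, 0 ≤ lam2 n := fun n => hN _ (Nat.le_add_left N n)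
  have hlam2top : Tendsto lam2 atTop atTop := hlamtop.comp (tendsto_add_atTop_nat N)
  have hS2 : ∀ σ : ℝ, a < σ → Summable fun n => c2 n * Real.exp (-σ * lam2 n) :=
    fun σ h => (summable_nat_add_iff N).mpr (hS σ h)
  set b : ℝ := a + 1 with hbdef
  have hab : a < b := by rw [hbdef]; linarith
  have hsum : ∀ z : ℂ, a < z.re →
      Summable fun n => (c n : ℂ) * Complex.exp (-z * lam n) := by
    intro z hz
    have := landau_summable_term hc hlamtop hS 0 hz
    exact this.congr fun n => by rw [pow_zero, mul_one]
  set P : ℂ → ℂ := fun z => ∑ n ∈ Finset.range N, (c n : ℂ) * Complex.exp (-z * lam n)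
    with hPdef
  set Φ : ℂ → ℂ := fun z => landauFF c' lam' 0 z - H z - P z with hΦdef
  set V : Set ℂ := U ∩ {z : ℂ | a' < z.re} with hVdef
  have hVopen : IsOpen V := hU.inter (isOpen_lt continuous_const Complex.continuous_re)
  have hVa : ∀ z : ℂ, a ≤ z.re → z ∈ V := fun z hz => ⟨hUa hz, lt_of_lt_of_le hlta hz⟩
  have hPdiff : Differentiable ℂ P := by
    rw [hPdef]
    apply Differentiable.fun_sum
    intro n _
    exact ((differentiable_id.neg.mul_const ((lam n : ℝ) : ℂ)).cexp).const_mul ((c n : ℝ) : ℂ)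
  have hΦdiff : DifferentiableOn ℂ Φ V := by
    apply DifferentiableOn.sub (DifferentiableOn.sub ?_ (hH.mono Set.inter_subset_left))
      hPdiff.differentiableOn
    intro z hz
    exact ((landau_hasDerivAt hc' hlamtop' hS' 0 hz.2).differentiableAt).differentiableWithinAt
  have hΦeq : ∀ z : ℂ, a < z.re → Φ z = landauFF c2 lam2 0 z := by
    intro z hz
    have hsplit := Summable.sum_add_tsum_nat_add
      (f := fun n => (c n : ℂ) * Complex.exp (-z * lam n)) N (hsum z hz)
    have hG : landauFF c' lam' 0 z = ∑' n, (c' n : ℂ) * Complex.exp (-z * lam' n) :=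
      tsum_congr fun n => by rw [pow_zero, mul_one]
    have htail : landauFF c2 lam2 0 z
        = ∑' n, (c (n + N) : ℂ) * Complex.exp (-z * lam (n + N)) :=
      tsum_congr fun n => by rw [pow_zero, mul_one]
    simp only [hΦdef, hPdef]
    rw [hG, hHeq z hz, htail, ← hsplit]
    ring
  -- the closed ball of radius 1 around b sits inside V
  have hKV : Metric.closedBall ((b : ℝ) : ℂ) 1 ⊆ V := by
    intro z hz
    apply hVa
    rw [Metric.mem_closedBall, dist_eq_norm] at hz
    have h1 : |(z - ((b : ℝ) : ℂ)).re| ≤ ‖z - ((b : ℝ) : ℂ)‖ := by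
      exact Complex.abs_re_le_norm _
    have h3 : (z - ((b : ℝ) : ℂ)).re = z.re - b := by simp
    rw [h3] at h1
    have := abs_le.mp (le_trans h1 hz)
    linarith [this.1]
  obtain ⟨δ, hδpos, hthick⟩ :=
    (isCompact_closedBall ((b : ℝ) : ℂ) 1).exists_thickening_subset_open hVopen hKV
  have hball : Metric.ball ((b : ℝ) : ℂ) (1 + δ) ⊆ V := by
    intro z hz
    rw [Metric.mem_ball] at hz
    rcases le_or_gt (dist z ((b : ℝ) : ℂ)) 1 with h | h
    · exact hKV (Metric.mem_closedBall.mpr h)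
    · apply hthick
      rw [Metric.mem_thickening_iff]
      set d : ℝ := dist z ((b : ℝ) : ℂ) with hddef
      have hd0 : (0 : ℝ) < d := lt_trans one_pos h
      have hdnorm : ‖z - ((b : ℝ) : ℂ)‖ = d := by rw [hddef, dist_eq_norm]
      refine ⟨((b : ℝ) : ℂ) + ((d⁻¹ : ℝ) : ℂ) * (z - ((b : ℝ) : ℂ)), ?_, ?_⟩
      · rw [Metric.mem_closedBall, dist_eq_norm]
        have heq : ((b : ℝ) : ℂ) + ((d⁻¹ : ℝ) : ℂ) * (z - ((b : ℝ) : ℂ)) - ((b : ℝ) : ℂ)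
            = ((d⁻¹ : ℝ) : ℂ) * (z - ((b : ℝ) : ℂ)) := by ring
        rw [heq, norm_mul, Complex.norm_real, Real.norm_eq_abs,
          abs_of_nonneg (inv_nonneg.mpr dist_nonneg), hdnorm,
          inv_mul_cancel₀ (ne_of_gt hd0)]
      · rw [dist_eq_norm]
        have heq : z - (((b : ℝ) : ℂ) + ((d⁻¹ : ℝ) : ℂ) * (z - ((b : ℝ) : ℂ)))
            = ((1 - d⁻¹ : ℝ) : ℂ) * (z - ((b : ℝ) : ℂ)) := by push_cast; ring
        rw [heq, norm_mul, Complex.norm_real, Real.norm_eq_abs, hdnorm,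
          abs_of_nonneg (by rw [sub_nonneg]; exact inv_le_one_of_one_le₀ h.le)]
        have : (1 - d⁻¹) * d = d - 1 := by field_simp
        rw [this]
        linarith
  set x : ℝ := a - δ / 2 with hxdef
  have hxa : x < a := by rw [hxdef]; linarith
  have hxball : ((x : ℝ) : ℂ) ∈ Metric.ball ((b : ℝ) : ℂ) (1 + δ) := by
    rw [Metric.mem_ball, dist_eq_norm, ← Complex.ofReal_sub, Complex.norm_real,
      Real.norm_eq_abs]
    rw [abs_of_nonpos (by rw [hxdef, hbdef]; linarith)]
    rw [hxdef, hbdef]; linarith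
  have hTay := Complex.hasSum_taylorSeries_on_ball (hΦdiff.mono hball) hxball
  have hbre : a < (((b : ℝ) : ℂ)).re := by rw [Complex.ofReal_re]; exact hab
  have hIter : ∀ k, ∀ z : ℂ, a < z.re → iteratedDeriv k Φ z = landauFF c2 lam2 k z := by
    intro k
    induction k with
    | zero => intro z hz; rw [iteratedDeriv_zero]; exact hΦeq z hz
    | succ k ih =>
      intro z hz
      rw [iteratedDeriv_succ]
      have hopen : IsOpen {w : ℂ | a < w.re} :=
        isOpen_lt continuous_const Complex.continuous_re
      have hev : iteratedDeriv k Φ =ᶠ[nhds z] landauFF c2 lam2 k := by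
        filter_upwards [hopen.mem_nhds hz] with w hw using ih w hw
      rw [hev.deriv_eq]
      exact (landau_hasDerivAt hc2 hlam2top hS2 k hz).deriv
  set R : ℕ → ℝ := fun k => ∑' n, c2 n * (-lam2 n) ^ k * Real.exp (-b * lam2 n) with hRdef
  have hFFreal : ∀ k, landauFF c2 lam2 k ((b : ℝ) : ℂ) = ((R k : ℝ) : ℂ) := by
    intro k
    simp only [hRdef, Complex.ofReal_tsum, landauFF]
    apply tsum_congr
    intro n
    rw [show (-((b : ℝ) : ℂ) * ((lam2 n : ℝ) : ℂ)) = ((-b * lam2 n : ℝ) : ℂ) by push_cast; ring,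
      ← Complex.ofReal_exp]
    push_cast
    ring
  have hsummU : Summable fun k : ℕ => (k.factorial : ℝ)⁻¹ * (x - b) ^ k * R k := by
    rw [← Complex.summable_ofReal]
    apply hTay.summable.congr
    intro k
    rw [smul_eq_mul, smul_eq_mul, hIter k _ hbre, hFFreal k]
    push_cast
    ring
  set r : ℕ → ℕ → ℝ :=
    fun k n => c2 n * Real.exp (-b * lam2 n) * (((b - x) * lam2 n) ^ k / k.factorial) with hrdef
  have hrnn : ∀ k n, 0 ≤ r k n := by
    intro k n
    apply mul_nonneg (mul_nonneg (hc2 n) (Real.exp_pos _).le)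
    apply div_nonneg _ (Nat.cast_nonneg _)
    apply pow_nonneg
    apply mul_nonneg _ (hlam2nn n)
    rw [hxdef, hbdef]; linarith
  have hurow : ∀ k, (k.factorial : ℝ)⁻¹ * (x - b) ^ k * R k = ∑' n, r k n := by
    intro k
    simp only [hRdef, hrdef]
    rw [mul_assoc, ← tsum_mul_left, ← tsum_mul_left]
    apply tsum_congr
    intro n
    have hpow : (x - b) ^ k * (-lam2 n) ^ k = ((b - x) * lam2 n) ^ k := by
      rw [← mul_pow]; ring_nf
    rw [div_eq_mul_inv, ← hpow]
    ring
  have hrowSummable : ∀ k, Summable fun n => r k n := by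
    intro k
    have hp := landau_poly hc2 hlam2top hS2 hab k
    apply (hp.mul_left ((b - x) ^ k / k.factorial)).congr
    intro n
    simp only [hrdef]
    rw [abs_of_nonneg (hlam2nn n), mul_pow, div_eq_mul_inv]
    ring
  have hprod : Summable fun p : ℕ × ℕ => r p.1 p.2 :=
    (summable_prod_of_nonneg fun p => hrnn p.1 p.2).mpr
      ⟨hrowSummable, hsummU.congr hurow⟩
  have hswap : Summable fun p : ℕ × ℕ => r p.2 p.1 :=
    ((Equiv.prodComm ℕ ℕ).summable_iff (f := fun p : ℕ × ℕ => r p.1 p.2)).mpr hprod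
  have hcol := ((summable_prod_of_nonneg fun p => hrnn p.2 p.1).mp hswap).2
  have hexp : ∀ n, (∑' k, r k n) = c2 n * Real.exp (-x * lam2 n) := by
    intro n
    simp only [hrdef]
    rw [tsum_mul_left]
    have hE : (∑' (k : ℕ), ((b - x) * lam2 n) ^ k / (k.factorial : ℝ)) = Real.exp ((b - x) * lam2 n) := by
      rw [Real.exp_eq_exp_ℝ, NormedSpace.exp_eq_tsum_div]
    rw [hE, mul_assoc, ← Real.exp_add]
    congr 2
    ring
  have hfinal : Summable fun n => c2 n * Real.exp (-x * lam2 n) :=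
    hcol.congr hexp
  have hxS : Summable fun n => c n * Real.exp (-x * lam n) :=
    (summable_nat_add_iff N).mp hfinal
  have : a ≤ x := ha.1 hxS
  linarith
end

section
/- Let θ ∈ (0,1) and let Σ_A be a two-sided subshift of finite type with metric d_θ. For every h ∈ F_θ(Σ_A) (real-valued Lipschitz for d_θ) there exist h̃, χ ∈ F_{θ^{1/2}}(Σ_A) such that h(ξ) = h̃(ξ) + χ(σξ) − χ(ξ) for all ξ ∈ Σ_A, and h̃ depends only on the nonnegative coordinates (ξ_0, ξ_1, ξ_2, …). Consequently, for every periodic point ξ with σ^n ξ = ξ, the Birkhoff sums satisfy S_n h(ξ) = S_n h̃(ξ). -/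
/-- The two-sided subshift of finite type with 0–1 transition matrix `A`. -/
def SigmaA {r : ℕ} (A : Matrix (Fin r) (Fin r) ℕ) : Type :=
  {ξ : ℤ → Fin r // ∀ i : ℤ, A (ξ i) (ξ (i + 1)) = 1}

/-- The left shift on `Σ_A`. -/
def shiftMap {r : ℕ} (A : Matrix (Fin r) (Fin r) ℕ) : SigmaA A → SigmaA A :=
  fun ξ => ⟨fun i => ξ.1 (i + 1), fun i => by simpa [add_assoc] using ξ.2 (i + 1)⟩

/-- Birkhoff sum `S_n h = h + h∘σ + … + h∘σ^{n−1}`. -/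
noncomputable def birkhoffSum' {X : Type*} (σ : X → X) (h : X → ℝ) (n : ℕ) (x : X) : ℝ :=
  ∑ i ∈ Finset.range n, h (σ^[i] x)


namespace Sinai17

variable {r : ℕ} {A : Matrix (Fin r) (Fin r) ℕ}

lemma iter_coord (n : ℕ) (ξ : SigmaA A) (i : ℤ) :
    ((shiftMap A)^[n] ξ).1 i = ξ.1 (i + n) := by
  induction n generalizing i ξ with
  | zero => simp
  | succ m ih =>
      rw [Function.iterate_succ_apply, ih]
      show ξ.1 (i + m + 1) = ξ.1 (i + (m + 1 : ℕ))
      congr 1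
      push_cast
      ring

open Classical in
noncomputable def pickF (A : Matrix (Fin r) (Fin r) ℕ) [Nonempty (SigmaA A)]
    (a : Fin r) : SigmaA A :=
  if h : ∃ η : SigmaA A, η.1 0 = a then h.choose else Classical.arbitrary _

lemma pickF_spec [Nonempty (SigmaA A)] (ξ : SigmaA A) :
    (pickF A (ξ.1 0)).1 0 = ξ.1 0 := by
  rw [pickF, dif_pos ⟨ξ, rfl⟩]
  exact Exists.choose_spec (⟨ξ, rfl⟩ : ∃ η : SigmaA A, η.1 0 = ξ.1 0)

noncomputable def extSeq [Nonempty (SigmaA A)] (ξ : SigmaA A) : SigmaA A :=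
  ⟨fun i => if 0 ≤ i then ξ.1 i else (pickF A (ξ.1 0)).1 i, by
    intro i
    dsimp only
    by_cases hi : 0 ≤ i
    · rw [if_pos hi, if_pos (by omega)]
      exact ξ.2 i
    · by_cases hi1 : i + 1 = 0
      · rw [if_neg hi, if_pos (by omega), show (i+1 : ℤ) = 0 from hi1]
        have := (pickF A (ξ.1 0)).2 i
        rwa [hi1, pickF_spec ξ] at this
      · rw [if_neg hi, if_neg (by omega)]
        exact (pickF A (ξ.1 0)).2 i⟩

lemma extSeq_nonneg [Nonempty (SigmaA A)] (ξ : SigmaA A) {i : ℤ} (hi : 0 ≤ i) :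
    (extSeq ξ).1 i = ξ.1 i := if_pos hi

lemma extSeq_coord_congr [Nonempty (SigmaA A)] {ξ η : SigmaA A}
    (h0 : ξ.1 0 = η.1 0) {i : ℤ} (hi : i < 0) :
    (extSeq ξ).1 i = (extSeq η).1 i := by
  show (if 0 ≤ i then ξ.1 i else (pickF A (ξ.1 0)).1 i)
      = (if 0 ≤ i then η.1 i else (pickF A (η.1 0)).1 i)
  rw [if_neg (by omega), if_neg (by omega), h0]

lemma extSeq_congr [Nonempty (SigmaA A)] {ξ η : SigmaA A}
    (hag : ∀ i : ℤ, 0 ≤ i → ξ.1 i = η.1 i) : extSeq ξ = extSeq η := by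
  apply Subtype.ext
  funext i
  by_cases hi : 0 ≤ i
  · rw [extSeq_nonneg _ hi, extSeq_nonneg _ hi]
    exact hag i hi
  · exact extSeq_coord_congr (hag 0 le_rfl) (by omega)

noncomputable def chi (A : Matrix (Fin r) (Fin r) ℕ) [Nonempty (SigmaA A)]
    (h : SigmaA A → ℝ) (ξ : SigmaA A) : ℝ :=
  ∑' n : ℕ, (h ((shiftMap A)^[n] (extSeq ξ)) - h ((shiftMap A)^[n] ξ))

end Sinai17

set_option maxHeartbeats 1600000 in
/-- Sinai's lemma: a `d_θ`-Lipschitz function `h` on the two-sided shift is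
cohomologous, via `F_{θ^{1/2}}` functions, to a function `h̃` depending only on
the nonnegative coordinates; Birkhoff sums over periodic points agree. -/
theorem stmt17 (r : ℕ) (A : Matrix (Fin r) (Fin r) ℕ)
    (θ : ℝ) (hθ : 0 < θ) (hθ1 : θ < 1)
    (h : SigmaA A → ℝ)
    (hLip : ∃ C : ℝ, ∀ (ξ η : SigmaA A) (k : ℕ),
      (∀ i : ℤ, |i| < (k : ℤ) → ξ.1 i = η.1 i) → |h ξ - h η| ≤ C * θ ^ k) :
    ∃ htil χ : SigmaA A → ℝ,
      (∃ C : ℝ, ∀ (ξ η : SigmaA A) (k : ℕ),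
        (∀ i : ℤ, |i| < (k : ℤ) → ξ.1 i = η.1 i) →
          |htil ξ - htil η| ≤ C * Real.sqrt θ ^ k) ∧
      (∃ C : ℝ, ∀ (ξ η : SigmaA A) (k : ℕ),
        (∀ i : ℤ, |i| < (k : ℤ) → ξ.1 i = η.1 i) →
          |χ ξ - χ η| ≤ C * Real.sqrt θ ^ k) ∧
      (∀ ξ : SigmaA A, h ξ = htil ξ + χ (shiftMap A ξ) - χ ξ) ∧
      (∀ ξ η : SigmaA A, (∀ i : ℤ, 0 ≤ i → ξ.1 i = η.1 i) → htil ξ = htil η) ∧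
      ∀ (ξ : SigmaA A) (n : ℕ), (shiftMap A)^[n] ξ = ξ →
        birkhoffSum' (shiftMap A) h n ξ = birkhoffSum' (shiftMap A) htil n ξ := by
  classical
  obtain ⟨C, hC⟩ := hLip
  rcases isEmpty_or_nonempty (SigmaA A) with hemp | hne
  · exact ⟨h, 0, ⟨0, fun ξ => (hemp.false ξ).elim⟩, ⟨0, fun ξ => (hemp.false ξ).elim⟩,
      fun ξ => (hemp.false ξ).elim, fun ξ => (hemp.false ξ).elim,
      fun ξ => (hemp.false ξ).elim⟩
  haveI := hne
  open Sinai17 in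
  -- abbreviations
  set s : ℝ := Real.sqrt θ with hsdef
  have hs0 : 0 < s := Real.sqrt_pos.2 hθ
  have hs2 : s ^ 2 = θ := Real.sq_sqrt hθ.le
  have hs1 : s < 1 := by nlinarith
  have hθs : θ ≤ s := by nlinarith
  set C0 : ℝ := |C| with hC0def
  have hC0 : 0 ≤ C0 := abs_nonneg C
  have hC' : ∀ (ξ η : SigmaA A) (k : ℕ),
      (∀ i : ℤ, |i| < (k : ℤ) → ξ.1 i = η.1 i) → |h ξ - h η| ≤ C0 * θ ^ k := by
    intro ξ η k hag
    exact (hC ξ η k hag).trans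
      (mul_le_mul_of_nonneg_right (le_abs_self C) (pow_nonneg hθ.le k))
  -- the summand
  set T : SigmaA A → ℕ → ℝ :=
    fun ξ n => h ((shiftMap A)^[n] (extSeq ξ)) - h ((shiftMap A)^[n] ξ) with hTdef
  have hTbound : ∀ ξ n, |T ξ n| ≤ C0 * θ ^ (n + 1) := by
    intro ξ n
    apply hC'
    intro i hi
    rw [iter_coord, iter_coord]
    have hi' := abs_lt.1 hi
    apply extSeq_nonneg
    push_cast at hi'
    omega
  have hTsummable : ∀ ξ, Summable (T ξ) := by
    intro ξ
    apply Summable.of_norm_bounded (g := fun n => (C0 * θ) * θ ^ n)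
      ((summable_geometric_of_lt_one hθ.le hθ1).mul_left _)
    intro n
    rw [Real.norm_eq_abs]
    calc |T ξ n| ≤ C0 * θ ^ (n + 1) := hTbound ξ n
      _ = (C0 * θ) * θ ^ n := by ring
  have hchi : ∀ ξ, chi A h ξ = ∑' n, T ξ n := fun ξ => rfl
  -- Lipschitz bound for chi
  set Cχ : ℝ := 4 * C0 / (1 - θ) with hCχdef
  have hCχ0 : 0 ≤ Cχ := by
    apply div_nonneg (by linarith) (by linarith)
  have hχLip : ∀ (ξ η : SigmaA A) (k : ℕ),
      (∀ i : ℤ, |i| < (k : ℤ) → ξ.1 i = η.1 i) →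
        |chi A h ξ - chi A h η| ≤ Cχ * s ^ k := by
    intro ξ η k hag
    set j := (k + 1) / 2 with hjdef
    set D : ℕ → ℝ := fun n => |T ξ n - T η n| with hDdef
    have hDsum : Summable D := ((hTsummable ξ).sub (hTsummable η)).abs
    have hD1 : ∀ n, D n ≤ 2 * C0 * θ ^ (n + 1) := by
      intro n
      calc D n ≤ |T ξ n| + |T η n| := abs_sub _ _
        _ ≤ C0 * θ ^ (n + 1) + C0 * θ ^ (n + 1) := add_le_add (hTbound ξ n) (hTbound η n)
        _ = 2 * C0 * θ ^ (n + 1) := by ring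
    have hD2 : ∀ n, n < k → D n ≤ 2 * C0 * θ ^ (k - n) := by
      intro n hn
      have h1 : |h ((shiftMap A)^[n] ξ) - h ((shiftMap A)^[n] η)| ≤ C0 * θ ^ (k - n) := by
        apply hC'
        intro i hi
        rw [iter_coord, iter_coord]
        have hi' := abs_lt.1 hi
        apply hag
        rw [abs_lt]
        omega
      have h2 : |h ((shiftMap A)^[n] (extSeq ξ)) - h ((shiftMap A)^[n] (extSeq η))|
          ≤ C0 * θ ^ (k - n) := by
        apply hC'
        intro i hi
        rw [iter_coord, iter_coord]
        have hi' := abs_lt.1 hi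
        by_cases hpos : 0 ≤ i + n
        · rw [extSeq_nonneg _ hpos, extSeq_nonneg _ hpos]
          apply hag
          rw [abs_lt]
          omega
        · exact extSeq_coord_congr (hag 0 (by simp; omega)) (by omega)
      calc D n = |(h ((shiftMap A)^[n] (extSeq ξ)) - h ((shiftMap A)^[n] (extSeq η)))
            - (h ((shiftMap A)^[n] ξ) - h ((shiftMap A)^[n] η))| := by
              rw [hDdef]; dsimp only; rw [hTdef]; dsimp only; ring_nf
        _ ≤ |h ((shiftMap A)^[n] (extSeq ξ)) - h ((shiftMap A)^[n] (extSeq η))|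
            + |h ((shiftMap A)^[n] ξ) - h ((shiftMap A)^[n] η)| := abs_sub _ _
        _ ≤ C0 * θ ^ (k - n) + C0 * θ ^ (k - n) := add_le_add h2 h1
        _ = 2 * C0 * θ ^ (k - n) := by ring
    have hsplit := Summable.sum_add_tsum_nat_add (f := D) j hDsum
    have htail : ∑' n, D (n + j) ≤ (2 * C0 * (1 - θ)⁻¹) * s ^ k := by
      have hsum2 : Summable (fun n : ℕ => (2 * C0 * θ ^ (j + 1)) * θ ^ n) :=
        (summable_geometric_of_lt_one hθ.le hθ1).mul_left _
      have hb : ∀ n : ℕ, D (n + j) ≤ (2 * C0 * θ ^ (j + 1)) * θ ^ n := by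
        intro n
        have := hD1 (n + j)
        have he : (2 * C0 * θ ^ (j + 1)) * θ ^ n = 2 * C0 * θ ^ (n + j + 1) := by ring
        linarith
      have h1 : ∑' n, D (n + j) ≤ ∑' n : ℕ, (2 * C0 * θ ^ (j + 1)) * θ ^ n :=
        Summable.tsum_le_tsum hb ((summable_nat_add_iff j).2 hDsum) hsum2
      have h2 : ∑' n : ℕ, (2 * C0 * θ ^ (j + 1)) * θ ^ n
          = (2 * C0 * θ ^ (j + 1)) * (1 - θ)⁻¹ := by
        rw [tsum_mul_left, tsum_geometric_of_lt_one hθ.le hθ1]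
      have he : θ ^ (j + 1) = s ^ (2 * (j + 1)) := by rw [pow_mul, hs2]
      have hle : s ^ (2 * (j + 1)) ≤ s ^ k :=
        pow_le_pow_of_le_one hs0.le hs1.le (by omega)
      have hinv : (0:ℝ) < (1 - θ)⁻¹ := by
        have : (0:ℝ) < 1 - θ := by linarith
        positivity
      have h3 : (2 * C0 * θ ^ (j + 1)) * (1 - θ)⁻¹ ≤ (2 * C0 * (1 - θ)⁻¹) * s ^ k := by
        have h4 : (2 * C0 * (1 - θ)⁻¹) * s ^ (2 * (j + 1)) ≤ (2 * C0 * (1 - θ)⁻¹) * s ^ k :=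
          mul_le_mul_of_nonneg_left hle (by positivity)
        have h5 : (2 * C0 * θ ^ (j + 1)) * (1 - θ)⁻¹
            = (2 * C0 * (1 - θ)⁻¹) * s ^ (2 * (j + 1)) := by rw [he]; ring
        linarith
      linarith
    have hhead : ∑ n ∈ Finset.range j, D n ≤ (2 * C0 * (1 - θ)⁻¹) * s ^ k := by
      have hstep : ∀ n ∈ Finset.range j, D n ≤ (2 * C0 * θ ^ (k - j + 1)) * θ ^ (j - 1 - n) := by
        intro n hn
        rw [Finset.mem_range] at hn
        have hnk : n < k := by omega
        refine (hD2 n hnk).trans (le_of_eq ?_)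
        have hexp : (k - j + 1) + (j - 1 - n) = k - n := by omega
        rw [← hexp, pow_add]
        ring
      have h1 : ∑ n ∈ Finset.range j, D n
          ≤ ∑ n ∈ Finset.range j, (2 * C0 * θ ^ (k - j + 1)) * θ ^ (j - 1 - n) :=
        Finset.sum_le_sum hstep
      have h2 : ∑ n ∈ Finset.range j, (2 * C0 * θ ^ (k - j + 1)) * θ ^ (j - 1 - n)
          = (2 * C0 * θ ^ (k - j + 1)) * ∑ n ∈ Finset.range j, θ ^ (j - 1 - n) := by
        rw [Finset.mul_sum]
      have h3 : ∑ n ∈ Finset.range j, θ ^ (j - 1 - n) ≤ (1 - θ)⁻¹ := by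
        rw [Finset.sum_range_reflect (fun m => θ ^ m) j]
        have h4 : ∑ n ∈ Finset.range j, θ ^ n ≤ ∑' n : ℕ, θ ^ n :=
          Summable.sum_le_tsum _ (fun i _ => by positivity)
            (summable_geometric_of_lt_one hθ.le hθ1)
        rw [tsum_geometric_of_lt_one hθ.le hθ1] at h4
        exact h4
      have hpw : (0:ℝ) ≤ 2 * C0 * θ ^ (k - j + 1) := by positivity
      have h5 : (2 * C0 * θ ^ (k - j + 1)) * ∑ n ∈ Finset.range j, θ ^ (j - 1 - n)
          ≤ (2 * C0 * θ ^ (k - j + 1)) * (1 - θ)⁻¹ := mul_le_mul_of_nonneg_left h3 hpw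
      have he : θ ^ (k - j + 1) = s ^ (2 * (k - j + 1)) := by rw [pow_mul, hs2]
      have hle : s ^ (2 * (k - j + 1)) ≤ s ^ k :=
        pow_le_pow_of_le_one hs0.le hs1.le (by omega)
      have h6 : (2 * C0 * θ ^ (k - j + 1)) * (1 - θ)⁻¹ ≤ (2 * C0 * (1 - θ)⁻¹) * s ^ k := by
        have hinv : (0:ℝ) < 1 - θ := by linarith
        have h7 : (2 * C0 * (1 - θ)⁻¹) * s ^ (2 * (k - j + 1)) ≤ (2 * C0 * (1 - θ)⁻¹) * s ^ k :=
          mul_le_mul_of_nonneg_left hle (by positivity)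
        have h8 : (2 * C0 * θ ^ (k - j + 1)) * (1 - θ)⁻¹
            = (2 * C0 * (1 - θ)⁻¹) * s ^ (2 * (k - j + 1)) := by rw [he]; ring
        linarith
      linarith
    calc |chi A h ξ - chi A h η| = |∑' n, (T ξ n - T η n)| := by
          rw [hchi, hchi, Summable.tsum_sub (hTsummable ξ) (hTsummable η)]
      _ ≤ ∑' n, D n := by
          have := norm_tsum_le_tsum_norm (f := fun n => T ξ n - T η n)
            (by simpa [Real.norm_eq_abs] using hDsum)
          simpa [Real.norm_eq_abs] using this
      _ = (∑ n ∈ Finset.range j, D n) + ∑' n, D (n + j) := hsplit.symm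
      _ ≤ (2 * C0 * (1 - θ)⁻¹) * s ^ k + (2 * C0 * (1 - θ)⁻¹) * s ^ k := add_le_add hhead htail
      _ = Cχ * s ^ k := by rw [hCχdef]; ring
  -- define htil
  set htil : SigmaA A → ℝ := fun ξ => h ξ + chi A h ξ - chi A h (shiftMap A ξ) with hhtildef
  refine ⟨htil, chi A h, ?_, ⟨Cχ, hχLip⟩, ?_, ?_, ?_⟩
  · -- htil Lipschitz
    refine ⟨C0 + Cχ + Cχ / s, ?_⟩
    intro ξ η k hag
    have hh := hC' ξ η k hag
    have h1 := hχLip ξ η k hag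
    have h2 : |chi A h (shiftMap A ξ) - chi A h (shiftMap A η)| ≤ Cχ * s ^ (k - 1) := by
      apply hχLip
      intro i hi
      have hi' := abs_lt.1 hi
      show ξ.1 (i + 1) = η.1 (i + 1)
      apply hag
      rw [abs_lt]
      omega
    have htri : |htil ξ - htil η| ≤ |h ξ - h η| + |chi A h ξ - chi A h η|
        + |chi A h (shiftMap A ξ) - chi A h (shiftMap A η)| := by
      rw [hhtildef]
      dsimp only
      calc |h ξ + chi A h ξ - chi A h (shiftMap A ξ) - (h η + chi A h η - chi A h (shiftMap A η))|
          = |(h ξ - h η) + ((chi A h ξ - chi A h η)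
              + -(chi A h (shiftMap A ξ) - chi A h (shiftMap A η)))| := by ring_nf
        _ ≤ |h ξ - h η| + |(chi A h ξ - chi A h η)
              + -(chi A h (shiftMap A ξ) - chi A h (shiftMap A η))| := abs_add_le _ _
        _ ≤ |h ξ - h η| + (|chi A h ξ - chi A h η|
              + |-(chi A h (shiftMap A ξ) - chi A h (shiftMap A η))|) :=
            add_le_add le_rfl (abs_add_le _ _)
        _ = _ := by rw [abs_neg]; ring
    have hpow : θ ^ k ≤ s ^ k := pow_le_pow_left₀ hθ.le hθs k
    have hstep : s ^ (k - 1) * s ≤ s ^ k := by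
      cases k with
      | zero => simpa using hs1.le
      | succ m => simp [pow_succ]
    have h2' : Cχ * s ^ (k - 1) ≤ (Cχ / s) * s ^ k := by
      have : Cχ * s ^ (k - 1) = (Cχ / s) * (s ^ (k - 1) * s) := by
        field_simp
      rw [this]
      exact mul_le_mul_of_nonneg_left hstep (by positivity)
    have hhh : |h ξ - h η| ≤ C0 * s ^ k :=
      hh.trans (mul_le_mul_of_nonneg_left hpow hC0)
    calc |htil ξ - htil η| ≤ _ := htri
      _ ≤ C0 * s ^ k + Cχ * s ^ k + (Cχ / s) * s ^ k :=
          add_le_add (add_le_add hhh h1) (h2.trans h2')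
      _ = (C0 + Cχ + Cχ / s) * s ^ k := by ring
  · -- cohomology identity
    intro ξ
    rw [hhtildef]
    dsimp only
    ring
  · -- depends only on nonnegative coordinates
    intro ξ η hag
    have hext : extSeq ξ = extSeq η := extSeq_congr hag
    have hagσ : ∀ i : ℤ, 0 ≤ i → (shiftMap A ξ).1 i = (shiftMap A η).1 i :=
      fun i hi => hag (i + 1) (by omega)
    have hextσ : extSeq (shiftMap A ξ) = extSeq (shiftMap A η) := extSeq_congr hagσ
    set g : ℕ → ℝ := fun n => h ((shiftMap A)^[n] η) - h ((shiftMap A)^[n] ξ) with hgdef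
    have hgb : ∀ n, |g n| ≤ C0 * θ ^ (n + 1) := by
      intro n
      apply hC'
      intro i hi
      have hi' := abs_lt.1 hi
      rw [iter_coord, iter_coord]
      exact (hag (i + n) (by push_cast at hi'; omega)).symm
    have hg : Summable g := by
      apply Summable.of_norm_bounded (g := fun n => (C0 * θ) * θ ^ n)
        ((summable_geometric_of_lt_one hθ.le hθ1).mul_left _)
      intro n
      rw [Real.norm_eq_abs]
      calc |g n| ≤ C0 * θ ^ (n + 1) := hgb n
        _ = (C0 * θ) * θ ^ n := by ring
    have e1 : chi A h ξ - chi A h η = ∑' n, g n := by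
      rw [hchi, hchi, ← Summable.tsum_sub (hTsummable ξ) (hTsummable η)]
      congr 1
      funext n
      show (h ((shiftMap A)^[n] (extSeq ξ)) - h ((shiftMap A)^[n] ξ))
          - (h ((shiftMap A)^[n] (extSeq η)) - h ((shiftMap A)^[n] η))
          = h ((shiftMap A)^[n] η) - h ((shiftMap A)^[n] ξ)
      rw [hext]
      ring
    have e2 : chi A h (shiftMap A ξ) - chi A h (shiftMap A η) = ∑' n, g (n + 1) := by
      rw [hchi, hchi, ← Summable.tsum_sub (hTsummable _) (hTsummable _)]
      congr 1
      funext n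
      show (h ((shiftMap A)^[n] (extSeq (shiftMap A ξ))) - h ((shiftMap A)^[n] (shiftMap A ξ)))
          - (h ((shiftMap A)^[n] (extSeq (shiftMap A η))) - h ((shiftMap A)^[n] (shiftMap A η)))
          = h ((shiftMap A)^[n + 1] η) - h ((shiftMap A)^[n + 1] ξ)
      rw [hextσ, ← Function.iterate_succ_apply (shiftMap A) n ξ,
        ← Function.iterate_succ_apply (shiftMap A) n η]
      ring
    have e3 : ∑' n, g n = g 0 + ∑' n, g (n + 1) := Summable.tsum_eq_zero_add hg
    have e4 : g 0 = h η - h ξ := by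
      show h ((shiftMap A)^[0] η) - h ((shiftMap A)^[0] ξ) = h η - h ξ
      simp
    have e5 : htil ξ - htil η = (h ξ - h η) + (chi A h ξ - chi A h η)
        - (chi A h (shiftMap A ξ) - chi A h (shiftMap A η)) := by
      show (h ξ + chi A h ξ - chi A h (shiftMap A ξ))
          - (h η + chi A h η - chi A h (shiftMap A η)) = _
      ring
    have hz : htil ξ - htil η = 0 := by
      rw [e5, e1, e2, e3, e4]
      ring
    linarith [hz]
  · -- Birkhoff sums
    intro ξ n hper
    unfold birkhoffSum'
    have hteles : ∑ i ∈ Finset.range n,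
        (chi A h ((shiftMap A)^[i + 1] ξ) - chi A h ((shiftMap A)^[i] ξ))
        = chi A h ((shiftMap A)^[n] ξ) - chi A h ((shiftMap A)^[0] ξ) :=
      Finset.sum_range_sub (fun i => chi A h ((shiftMap A)^[i] ξ)) n
    have hterm : ∀ i, h ((shiftMap A)^[i] ξ) - htil ((shiftMap A)^[i] ξ)
        = chi A h ((shiftMap A)^[i + 1] ξ) - chi A h ((shiftMap A)^[i] ξ) := by
      intro i
      rw [hhtildef]
      dsimp only
      rw [Function.iterate_succ_apply' (shiftMap A) i ξ]
      ring
    have hsum : ∑ i ∈ Finset.range n, h ((shiftMap A)^[i] ξ)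
        - ∑ i ∈ Finset.range n, htil ((shiftMap A)^[i] ξ)
        = chi A h ((shiftMap A)^[n] ξ) - chi A h ((shiftMap A)^[0] ξ) := by
      rw [← Finset.sum_sub_distrib]
      rw [Finset.sum_congr rfl (fun i _ => hterm i)]
      exact hteles
    rw [hper] at hsum
    simp only [Function.iterate_zero_apply, sub_self] at hsum
    linarith [hsum]
end
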